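/- arXiv:2012.10070 — 2 statements merged into one kernel-verified Lean document; each statement's English description precedes it below -/
import Mathlib

section
/- Let k be a positive integer and let i be the unique non-negative integer with 2^i + i ≤ k ≤ 2^{i+1} + i. Then m(T_k) = k − i. -/
open SimpleGraph

/-- A proper coloring by natural number colors. -/
def IsProperNat {V : Type*} (G : SimpleGraph V) (c : V → ℕ) : Prop :=
  ∀ ⦃v w⦄, G.Adj v w → c v ≠ c w

/-- A Grundy coloring of `G` with colors `1, …, k`: proper, every color used, and
every vertex of color `j` has a neighbor of each color `i < j`. -/
def IsGrundyColoring {V : Type*} (G : SimpleGraph V) (k : ℕ) (c : V → ℕ) : Prop :=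
  (∀ v, c v ∈ Finset.Icc 1 k) ∧ IsProperNat G c ∧
  (∀ i ∈ Finset.Icc 1 k, ∃ v, c v = i) ∧
  (∀ v, ∀ i, 1 ≤ i → i < c v → ∃ w, G.Adj v w ∧ c w = i)

/-- The Grundy number: the maximum number of colors in a Grundy coloring. -/
noncomputable def grundyNumber {V : Type*} (G : SimpleGraph V) : ℕ :=
  sSup {k | ∃ c : V → ℕ, IsGrundyColoring G k c}

/-- A color-dominating (b-)coloring with colors `1, …, k`: proper, and each color class
contains a vertex having neighbors in all the other color classes. -/
def IsBColoring {V : Type*} (G : SimpleGraph V) (k : ℕ) (c : V → ℕ) : Prop :=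
  (∀ v, c v ∈ Finset.Icc 1 k) ∧ IsProperNat G c ∧
  (∀ i ∈ Finset.Icc 1 k, ∃ v, c v = i ∧
    ∀ j ∈ Finset.Icc 1 k, j ≠ i → ∃ w, G.Adj v w ∧ c w = j)

/-- The b-chromatic number: the maximum number of colors in a b-coloring. -/
noncomputable def bChromatic {V : Type*} (G : SimpleGraph V) : ℕ :=
  sSup {k | ∃ c : V → ℕ, IsBColoring G k c}

/-- `m(G) = max {k : d_k ≥ k - 1}` for the non-increasing degree sequence; equivalently
the largest `k` such that `G` has `k` vertices of degree at least `k - 1`. -/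
noncomputable def mParam {V : Type*} (G : SimpleGraph V) : ℕ :=
  sSup {k | ∃ s : Finset V, s.card = k ∧ ∀ v ∈ s, k - 1 ≤ (G.neighborSet v).ncard}

/-- A graph is b-monotone if the b-chromatic number of every induced subgraph is at most
that of the graph itself. -/
def BMonotone {V : Type*} (G : SimpleGraph V) : Prop :=
  ∀ s : Set V, bChromatic (G.induce s) ≤ bChromatic G

/-- Vertex type of the tree atoms: `atomV n` has `2^n` vertices; `T_k` lives on `atomV (k-1)`. -/
def atomV : ℕ → Type
  | 0 => Unit
  | n + 1 => atomV n ⊕ atomV n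

instance atomV.fintype : ∀ n, Fintype (atomV n)
  | 0 => inferInstanceAs (Fintype Unit)
  | n + 1 => by
    have := atomV.fintype n
    exact inferInstanceAs (Fintype (atomV n ⊕ atomV n))

/-- Adjacency of the tree atom: `T_{k+1}` is `T_k` together with a new leaf attached to
every vertex of `T_k`. -/
def atomAdj : (n : ℕ) → atomV n → atomV n → Prop
  | 0, _, _ => False
  | n + 1, Sum.inl a, Sum.inl b => atomAdj n a b
  | _ + 1, Sum.inl a, Sum.inr b => a = b
  | _ + 1, Sum.inr a, Sum.inl b => a = b
  | _ + 1, Sum.inr _, Sum.inr _ => False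

theorem atomAdj_symm : ∀ n (a b : atomV n), atomAdj n a b → atomAdj n b a
  | 0, _, _, h => h.elim
  | n + 1, Sum.inl a, Sum.inl b, h => atomAdj_symm n a b h
  | _ + 1, Sum.inl _, Sum.inr _, h => h.symm
  | _ + 1, Sum.inr _, Sum.inl _, h => h.symm
  | _ + 1, Sum.inr _, Sum.inr _, h => h.elim

theorem atomAdj_irrefl : ∀ n (a : atomV n), ¬ atomAdj n a a
  | 0, _, h => h.elim
  | n + 1, Sum.inl a, h => atomAdj_irrefl n a h
  | _ + 1, Sum.inr _, h => h.elim

def atomGraph (n : ℕ) : SimpleGraph (atomV n) where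
  Adj := atomAdj n
  symm := ⟨by intro a b h; exact atomAdj_symm n a b h⟩
  loopless := ⟨by intro a h; exact atomAdj_irrefl n a h⟩

/-- The tree atom `T_k` (for `k ≥ 1`), on `2^(k-1)` vertices. -/
def treeAtom (k : ℕ) : SimpleGraph (atomV (k - 1)) := atomGraph (k - 1)

/-!
Passing from `T_{n+1}` to `T_{n+2}` raises the degree of every old vertex by one and adds leaves
of degree one, so the vertices of degree at least `d + 2` are exactly the old vertices of degree
at least `d + 1`. Hence `T_{n+1}`, on `2^n` vertices, has `2^(n-d)` vertices of degree at least
`d + 1` when `d < n` and none otherwise. These counts decrease in `d`, so `m(G) = m` as soon as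
`G` has at least `m` vertices of degree `≥ m - 1` and at most `m` of degree `≥ m`; for `T_k` and
`m = k - i` the two counts are `2^(i+1) ≥ k - i` and `2^i ≤ k - i`.
-/

namespace SimpleGraph

variable {V : Type*} (G : SimpleGraph V)

def vertsDegreeGE (d : ℕ) : Set V := {v | d ≤ (G.neighborSet v).ncard}

theorem vertsDegreeGE_zero : G.vertsDegreeGE 0 = Set.univ := by
  simp [vertsDegreeGE]

theorem vertsDegreeGE_anti {d d' : ℕ} (h : d ≤ d') : G.vertsDegreeGE d' ⊆ G.vertsDegreeGE d :=
  fun _ hv => le_trans h hv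

theorem exists_finset_degree_ge_iff [Finite V] (j : ℕ) :
    (∃ s : Finset V, s.card = j ∧ ∀ v ∈ s, j - 1 ≤ (G.neighborSet v).ncard) ↔
      j ≤ (G.vertsDegreeGE (j - 1)).ncard := by
  constructor
  · rintro ⟨s, rfl, hs⟩
    simpa using Set.ncard_le_ncard (s := ↑s) (t := G.vertsDegreeGE (s.card - 1)) hs
  · intro hj
    obtain ⟨t, hts, rfl⟩ := Set.exists_subset_card_eq hj
    exact ⟨t.toFinite.toFinset, by rw [Set.ncard_eq_toFinset_card],
      fun v hv => hts (by simpa using hv)⟩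

end SimpleGraph

open SimpleGraph

theorem mParam_eq_of_le_ncard_of_ncard_le {V : Type*} [Finite V] (G : SimpleGraph V) (m : ℕ)
    (hlow : m ≤ (G.vertsDegreeGE (m - 1)).ncard) (hup : (G.vertsDegreeGE m).ncard ≤ m) :
    mParam G = m := by
  have hbound : ∀ j ∈ {j | ∃ s : Finset V, s.card = j ∧
      ∀ v ∈ s, j - 1 ≤ (G.neighborSet v).ncard}, j ≤ m := by
    intro j hj
    rw [Set.mem_ofPred_eq, exists_finset_degree_ge_iff] at hj
    by_contra! hmj
    have := Set.ncard_le_ncard (G.vertsDegreeGE_anti (Nat.le_sub_one_of_lt hmj))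
    omega
  exact le_antisymm (csSup_le ⟨m, (G.exists_finset_degree_ge_iff m).2 hlow⟩ hbound)
    (le_csSup ⟨m, hbound⟩ ((G.exists_finset_degree_ge_iff m).2 hlow))

namespace atomV

variable {n : ℕ}

/- `atomV (n + 1)` is `atomV n ⊕ atomV n` only after unfolding `atomV`, which `simp` does not do,
so `Sum.inl` and `Sum.inr` are named at the type `atomV (n + 1)`: `old` embeds `T_{n+1}` into
`T_{n+2}` and `leaf` sends a vertex to the leaf attached to it. -/
def old : atomV n → atomV (n + 1) := Sum.inl

def leaf : atomV n → atomV (n + 1) := Sum.inr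

theorem old_injective : Function.Injective (old : atomV n → atomV (n + 1)) :=
  Sum.inl_injective

theorem leaf_injective : Function.Injective (leaf : atomV n → atomV (n + 1)) :=
  Sum.inr_injective

@[simp]
theorem old_ne_leaf (a b : atomV n) : old a ≠ leaf b := Sum.inl_ne_inr

@[simp]
theorem leaf_ne_old (a b : atomV n) : leaf a ≠ old b := Sum.inr_ne_inl

theorem old_or_leaf (v : atomV (n + 1)) : (∃ a, old a = v) ∨ ∃ a, leaf a = v := by
  cases v with
  | inl a => exact .inl ⟨a, rfl⟩
  | inr a => exact .inr ⟨a, rfl⟩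

theorem card : ∀ n, Nat.card (atomV n) = 2 ^ n
  | 0 => show Nat.card Unit = 1 from Nat.card_unique
  | n + 1 => by
    rw [show atomV (n + 1) = (atomV n ⊕ atomV n) from rfl, Nat.card_sum, card n]
    ring

end atomV

section atomGraph

open atomV

variable {n : ℕ}

@[simp]
theorem atomGraph_adj_old_old (a b : atomV n) :
    (atomGraph (n + 1)).Adj (old a) (old b) ↔ (atomGraph n).Adj a b := Iff.rfl

@[simp]
theorem atomGraph_adj_old_leaf (a b : atomV n) :
    (atomGraph (n + 1)).Adj (old a) (leaf b) ↔ a = b := Iff.rfl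

@[simp]
theorem atomGraph_adj_leaf_old (a b : atomV n) :
    (atomGraph (n + 1)).Adj (leaf a) (old b) ↔ a = b := Iff.rfl

@[simp]
theorem atomGraph_not_adj_leaf_leaf (a b : atomV n) :
    ¬ (atomGraph (n + 1)).Adj (leaf a) (leaf b) := id

theorem atomGraph_neighborSet_old (a : atomV n) :
    (atomGraph (n + 1)).neighborSet (old a) =
      insert (leaf a) (old '' (atomGraph n).neighborSet a) := by
  ext w
  obtain ⟨b, rfl⟩ | ⟨b, rfl⟩ := old_or_leaf w <;>
    simp [old_injective.mem_set_image, leaf_injective.eq_iff, eq_comm]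

theorem atomGraph_neighborSet_leaf (a : atomV n) :
    (atomGraph (n + 1)).neighborSet (leaf a) = {old a} := by
  ext w
  obtain ⟨b, rfl⟩ | ⟨b, rfl⟩ := old_or_leaf w <;>
    simp [old_injective.eq_iff, eq_comm]

theorem ncard_atomGraph_neighborSet_old (a : atomV n) :
    ((atomGraph (n + 1)).neighborSet (old a)).ncard = ((atomGraph n).neighborSet a).ncard + 1 := by
  rw [atomGraph_neighborSet_old, Set.ncard_insert_of_notMem (by simp),
    Set.ncard_image_of_injective _ old_injective]

theorem ncard_atomGraph_neighborSet_leaf (a : atomV n) :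
    ((atomGraph (n + 1)).neighborSet (leaf a)).ncard = 1 := by
  rw [atomGraph_neighborSet_leaf, Set.ncard_singleton]

theorem atomGraph_zero_vertsDegreeGE_succ (d : ℕ) : (atomGraph 0).vertsDegreeGE (d + 1) = ∅ :=
  Set.eq_empty_of_forall_notMem fun v hv => by
    have : (atomGraph 0).neighborSet v = ∅ := Set.eq_empty_of_forall_notMem fun _ h => h
    simp [vertsDegreeGE, this] at hv

theorem atomGraph_succ_vertsDegreeGE_one : (atomGraph (n + 1)).vertsDegreeGE 1 = Set.univ := by
  refine Set.eq_univ_of_forall fun v => ?_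
  obtain ⟨a, rfl⟩ | ⟨a, rfl⟩ := old_or_leaf v <;>
    simp [vertsDegreeGE, ncard_atomGraph_neighborSet_old, ncard_atomGraph_neighborSet_leaf]

theorem atomGraph_succ_vertsDegreeGE_add_two (d : ℕ) :
    (atomGraph (n + 1)).vertsDegreeGE (d + 2) = old '' (atomGraph n).vertsDegreeGE (d + 1) := by
  ext v
  obtain ⟨a, rfl⟩ | ⟨a, rfl⟩ := old_or_leaf v <;>
    simp [vertsDegreeGE, old_injective.mem_set_image, ncard_atomGraph_neighborSet_old,
      ncard_atomGraph_neighborSet_leaf]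

theorem ncard_atomGraph_vertsDegreeGE_succ :
    ∀ n d, ((atomGraph n).vertsDegreeGE (d + 1)).ncard = if d < n then 2 ^ (n - d) else 0
  | 0, d => by simp [atomGraph_zero_vertsDegreeGE_succ]
  | n + 1, 0 => by rw [atomGraph_succ_vertsDegreeGE_one, Set.ncard_univ, atomV.card]; simp
  | n + 1, d + 1 => by
    rw [atomGraph_succ_vertsDegreeGE_add_two, Set.ncard_image_of_injective _ old_injective,
      ncard_atomGraph_vertsDegreeGE_succ n d]
    simp

end atomGraph

/-- If `2^i + i ≤ k ≤ 2^(i+1) + i` then `m(T_k) = k - i`. -/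
theorem mParam_treeAtom (k i : ℕ) (h1 : 2 ^ i + i ≤ k) (h2 : k ≤ 2 ^ (i + 1) + i) :
    mParam (treeAtom k) = k - i := by
  have hi : i < 2 ^ i := Nat.lt_two_pow_self
  obtain ⟨n, rfl⟩ : ∃ n, k = n + 1 := ⟨k - 1, by omega⟩
  refine mParam_eq_of_le_ncard_of_ncard_le (atomGraph n) _ ?_ ?_
  · rw [show n + 1 - i - 1 = n - i by omega]
    obtain hin | hin := Nat.lt_or_ge i n
    · rw [show n - i = (n - i - 1) + 1 by omega, ncard_atomGraph_vertsDegreeGE_succ,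
        if_pos (by omega), show n - (n - i - 1) = i + 1 by omega]
      omega
    · obtain rfl : n = 0 := by omega
      rw [Nat.zero_sub, vertsDegreeGE_zero, Set.ncard_univ, atomV.card]
      omega
  · rw [show n + 1 - i = (n - i) + 1 by omega, ncard_atomGraph_vertsDegreeGE_succ]
    split_ifs
    · rw [show n - (n - i) = i by omega]
      omega
    · omega
end

section
/- For any positive integer k ≥ 2, k − ⌊log₂(k−1)⌋ ≤ b(T_k) ≤ k − ⌊log₂ k⌋ + 1, where T_k is the k-th tree atom. -/
open SimpleGraph

/-!
Number the vertices of `T_(n+1)` by `0, …, 2 ^ n - 1` so that the leaf attached to `x` at step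
`p` is `x + 2 ^ p`. The parent of `x ≠ 0` is then `x` with its top bit dropped, and
`deg x + ⌊log₂ x⌋ = n`.

Upper bound: in a b-colouring with `K` colours the `K` colour-dominating vertices have degree at
least `K - 1`, so they all lie below `2 ^ (n + 2 - K)`; and `K ≤ 2 ^ (n + 2 - K)` forces
`K ≤ n + 2 - ⌊log₂ (n + 1)⌋`.

Lower bound: for `m = n + 1 - ⌊log₂ n⌋` every `v < m` has degree at least `m - 1`. Colour `v < m`
by `v + 1`. The degree bound leaves `v` enough children `≥ m` to receive every colour that `v`
misses among its neighbours below `m`; all remaining vertices get `1` or `2`, avoiding the colour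
of their parent.
-/

open Finset

lemma Finset.exists_partial_surj_of_card_le {α β : Type*} {s : Finset α} {t : Finset β}
    (h : s.card ≤ t.card) :
    ∃ σ : β → Option α, (∀ b a, σ b = some a → a ∈ s) ∧ ∀ a ∈ s, ∃ b ∈ t, σ b = some a := by
  classical
  obtain ⟨t', ht', hcard⟩ := exists_subset_card_eq h
  let e : t' ≃ s := Fintype.equivOfCardEq (by simp [hcard])
  refine ⟨fun b => if hb : b ∈ t' then some (e ⟨b, hb⟩) else none, ?_, ?_⟩
  · intro b a hba
    dsimp only at hba
    split_ifs at hba with hb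
    rw [← Option.some.inj hba]
    exact (e _).2
  · intro a ha
    refine ⟨e.symm ⟨a, ha⟩, ht' (e.symm ⟨a, ha⟩).2, ?_⟩
    simp

lemma Finset.card_erase_sdiff_le_card_sdiff {α : Type*} [DecidableEq α] {R N : Finset α} {v : α}
    (hvR : v ∈ R) (hvN : v ∉ N) (h : R.card - 1 ≤ N.card) :
    (R.erase v \ N).card ≤ (N \ R).card := by
  have h₁ := card_sdiff_add_card_inter (R.erase v) N
  have h₂ := card_sdiff_add_card_inter N R
  have hinter : R.erase v ∩ N = N ∩ R := by
    rw [erase_inter, inter_comm, erase_eq_of_notMem (fun h => hvN (mem_inter.1 h).1)]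
  rw [card_erase_of_mem hvR, hinter] at h₁
  omega

section BColoring

variable {V : Type*} {G : SimpleGraph V} {K : ℕ} {c : V → ℕ}

lemma IsBColoring.le_ncard_setOf_le_ncard_neighborSet [Finite V] (hc : IsBColoring G K c) :
    K ≤ {v | K - 1 ≤ (G.neighborSet v).ncard}.ncard := by
  obtain ⟨-, -, hdom⟩ := hc
  have hcolors : ((Icc 1 K : Finset ℕ) : Set ℕ) ⊆ c '' {v | K - 1 ≤ (G.neighborSet v).ncard} := by
    intro i hi
    obtain ⟨v, rfl, hv⟩ := hdom i hi
    refine ⟨v, ?_, rfl⟩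
    have hothers : (((Icc 1 K).erase (c v) : Finset ℕ) : Set ℕ) ⊆ c '' G.neighborSet v := by
      intro j hj
      obtain ⟨hji, hj⟩ := mem_erase.1 hj
      obtain ⟨w, hvw, rfl⟩ := hv j hj hji
      exact ⟨w, hvw, rfl⟩
    calc K - 1 = (((Icc 1 K).erase (c v) : Finset ℕ) : Set ℕ).ncard := by
          rw [Set.ncard_coe_finset, card_erase_of_mem hi, Nat.card_Icc, Nat.add_sub_cancel]
      _ ≤ (c '' G.neighborSet v).ncard := Set.ncard_le_ncard hothers (Set.toFinite _)
      _ ≤ (G.neighborSet v).ncard := Set.ncard_image_le (Set.toFinite _)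
  calc K = ((Icc 1 K : Finset ℕ) : Set ℕ).ncard := by
        rw [Set.ncard_coe_finset, Nat.card_Icc, Nat.add_sub_cancel]
    _ ≤ _ := Set.ncard_le_ncard hcolors (Set.toFinite _)
    _ ≤ _ := Set.ncard_image_le (Set.toFinite _)

lemma IsBColoring.le_bChromatic [Finite V] (hc : IsBColoring G K c) : K ≤ bChromatic G :=
  le_csSup ⟨Nat.card V, fun _ ⟨_, hc'⟩ =>
    hc'.le_ncard_setOf_le_ncard_neighborSet.trans (Set.ncard_le_card _)⟩ ⟨c, hc⟩

lemma bChromatic_le {B : ℕ} (h : ∀ K c, IsBColoring G K c → K ≤ B) : bChromatic G ≤ B :=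
  csSup_le' fun K ⟨c, hc⟩ => h K c hc

end BColoring

lemma le_add_two_sub_log_of_le_two_pow {n K : ℕ} (h : K ≤ 2 ^ (n + 2 - K)) :
    K ≤ n + 2 - Nat.log 2 (n + 1) := by
  have hKn : K ≤ n + 1 := by
    by_contra!
    rw [show n + 2 - K = 0 by omega, pow_zero] at h
    omega
  have hlog : Nat.log 2 (n + 1) < n + 2 - K + 1 := by
    refine Nat.log_lt_of_lt_pow (Nat.succ_ne_zero n) ?_
    have := Nat.lt_two_pow_self (n := n + 2 - K)
    rw [pow_succ]
    omega
  omega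

def dropTopBit (x : ℕ) : ℕ := x - 2 ^ Nat.log 2 x

lemma dropTopBit_lt {x : ℕ} (hx : x ≠ 0) : dropTopBit x < x :=
  Nat.sub_lt (Nat.pos_of_ne_zero hx) (by positivity)

lemma dropTopBit_lt_two_pow_log (x : ℕ) : dropTopBit x < 2 ^ Nat.log 2 x := by
  have := Nat.lt_pow_succ_log_self Nat.one_lt_two x
  rw [dropTopBit, pow_succ] at *
  omega

lemma log_add_two_pow {x p : ℕ} (hx : x < 2 ^ p) : Nat.log 2 (x + 2 ^ p) = p :=
  Nat.log_eq_of_pow_le_of_lt_pow (by omega) (by rw [pow_succ]; omega)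

lemma dropTopBit_add_two_pow {x p : ℕ} (hx : x < 2 ^ p) : dropTopBit (x + 2 ^ p) = x := by
  rw [dropTopBit, log_add_two_pow hx, Nat.add_sub_cancel]

lemma dropTopBit_eq_iff {x y : ℕ} :
    (y ≠ 0 ∧ dropTopBit y = x) ↔ ∃ p, x < 2 ^ p ∧ y = x + 2 ^ p := by
  constructor
  · rintro ⟨hy, rfl⟩
    refine ⟨Nat.log 2 y, dropTopBit_lt_two_pow_log y, ?_⟩
    have := Nat.pow_log_le_self 2 hy
    rw [dropTopBit]
    omega
  · rintro ⟨p, hx, rfl⟩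
    exact ⟨by positivity, dropTopBit_add_two_pow hx⟩

def bitTree : SimpleGraph ℕ where
  Adj x y := (y ≠ 0 ∧ dropTopBit y = x) ∨ (x ≠ 0 ∧ dropTopBit x = y)
  symm := ⟨fun _ _ => Or.symm⟩
  loopless := ⟨fun _ h => by rcases h with ⟨hx, h⟩ | ⟨hx, h⟩ <;> exact (dropTopBit_lt hx).ne h⟩

instance : DecidableRel bitTree.Adj := fun x y =>
  inferInstanceAs (Decidable ((y ≠ 0 ∧ dropTopBit y = x) ∨ (x ≠ 0 ∧ dropTopBit x = y)))

lemma bitTree_adj_iff {x y : ℕ} :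
    bitTree.Adj x y ↔ (y ≠ 0 ∧ dropTopBit y = x) ∨ (x ≠ 0 ∧ dropTopBit x = y) := Iff.rfl

lemma bitTree_adj_of_lt {x y : ℕ} (h : bitTree.Adj x y) (hxy : x < y) :
    y ≠ 0 ∧ dropTopBit y = x := by
  rcases h with h | ⟨hx, rfl⟩
  · exact h
  · exact absurd hxy (dropTopBit_lt hx).not_gt

def bitNbrs (n x : ℕ) : Finset ℕ := (range (2 ^ n)).filter (bitTree.Adj x)

lemma notMem_bitNbrs_self (n x : ℕ) : x ∉ bitNbrs n x := fun h => (mem_filter.1 h).2.ne rfl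

lemma add_two_pow_lt_two_pow_iff {x p n : ℕ} (hx : x < 2 ^ p) : x + 2 ^ p < 2 ^ n ↔ p < n := by
  constructor
  · intro h
    by_contra! hnp
    have := Nat.pow_le_pow_right Nat.two_pos hnp
    omega
  · intro h
    have := Nat.pow_le_pow_right Nat.two_pos h
    rw [pow_succ] at this
    omega

lemma bitNbrs_eq {n x : ℕ} (hx : x < 2 ^ n) :
    bitNbrs n x = ((range n).filter (x < 2 ^ ·)).image (x + 2 ^ ·) ∪
      (if x = 0 then ∅ else {dropTopBit x}) := by
  ext y
  simp only [bitNbrs, mem_filter, mem_range, mem_union, mem_image]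
  rw [bitTree_adj_iff, dropTopBit_eq_iff]
  constructor
  · rintro ⟨hy, ⟨p, hxp, rfl⟩ | ⟨hx0, rfl⟩⟩
    · exact Or.inl ⟨p, ⟨(add_two_pow_lt_two_pow_iff hxp).1 hy, hxp⟩, rfl⟩
    · simp [hx0]
  · rintro (⟨p, ⟨hpn, hxp⟩, rfl⟩ | hy)
    · exact ⟨(add_two_pow_lt_two_pow_iff hxp).2 hpn, Or.inl ⟨p, hxp, rfl⟩⟩
    · split_ifs at hy with hx0
      · simp at hy
      · rw [mem_singleton] at hy
        subst hy
        exact ⟨(dropTopBit_lt hx0).trans hx, Or.inr ⟨hx0, rfl⟩⟩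

lemma card_bitNbrs_add_log {n x : ℕ} (hx : x < 2 ^ n) :
    (bitNbrs n x).card + Nat.log 2 x = n := by
  have hinj : Function.Injective (x + 2 ^ ·) :=
    (add_right_injective x).comp (Nat.pow_right_injective le_rfl)
  have hdisj : Disjoint (((range n).filter (x < 2 ^ ·)).image (x + 2 ^ ·))
      (if x = 0 then ∅ else {dropTopBit x}) := by
    split_ifs with hx0
    · exact disjoint_empty_right _
    · simp only [disjoint_singleton_right, mem_image, not_exists, not_and]
      intro p _ _
      have := dropTopBit_lt hx0
      have := Nat.two_pow_pos p
      omega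
  rw [bitNbrs_eq hx, card_union_of_disjoint hdisj, card_image_of_injective _ hinj]
  split_ifs with hx0
  · subst hx0
    simp
  · have hfilter : (range n).filter (x < 2 ^ ·) = Ioo (Nat.log 2 x) n := by
      ext p
      simp only [mem_filter, mem_range, mem_Ioo, Nat.log_lt_iff_lt_pow Nat.one_lt_two hx0]
      tauto
    have := Nat.log_lt_of_lt_pow hx0 hx
    rw [hfilter, Nat.card_Ioo, card_singleton]
    omega

def atomIndex : (n : ℕ) → atomV n → ℕ
  | 0, _ => 0
  | n + 1, Sum.inl a => atomIndex n a
  | n + 1, Sum.inr a => atomIndex n a + 2 ^ n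

lemma atomIndex_lt : ∀ n (a : atomV n), atomIndex n a < 2 ^ n
  | 0, _ => Nat.one_pos
  | n + 1, Sum.inl a => (atomIndex_lt n a).trans (Nat.pow_lt_pow_succ Nat.one_lt_two)
  | n + 1, Sum.inr a => by
    have := atomIndex_lt n a
    rw [atomIndex, pow_succ]
    omega

lemma atomIndex_injective : ∀ n, Function.Injective (atomIndex n)
  | 0, _, _, _ => rfl
  | n + 1, Sum.inl a, Sum.inl b, h => congrArg Sum.inl (atomIndex_injective n h)
  | n + 1, Sum.inl a, Sum.inr b, h => by
    have := atomIndex_lt n a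
    simp only [atomIndex] at h
    omega
  | n + 1, Sum.inr a, Sum.inl b, h => by
    have := atomIndex_lt n b
    simp only [atomIndex] at h
    omega
  | n + 1, Sum.inr a, Sum.inr b, h =>
    congrArg Sum.inr (atomIndex_injective n (Nat.add_right_cancel h))

lemma exists_atomIndex_eq : ∀ n {x : ℕ}, x < 2 ^ n → ∃ a, atomIndex n a = x
  | 0, x, hx => ⟨(), by rw [pow_zero, Nat.lt_one_iff] at hx; exact hx.symm⟩
  | n + 1, x, hx => by
    rcases lt_or_ge x (2 ^ n) with h | h
    · obtain ⟨a, rfl⟩ := exists_atomIndex_eq n h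
      exact ⟨Sum.inl a, rfl⟩
    · obtain ⟨a, ha⟩ := exists_atomIndex_eq n (x := x - 2 ^ n) (by rw [pow_succ] at hx; omega)
      exact ⟨Sum.inr a, by simp only [atomIndex]; omega⟩

lemma bitTree_adj_add_two_pow_iff {x y n : ℕ} (hx : x < 2 ^ n) (hy : y < 2 ^ n) :
    bitTree.Adj x (y + 2 ^ n) ↔ x = y := by
  rw [bitTree_adj_iff, dropTopBit_add_two_pow hy]
  constructor
  · rintro (⟨-, h⟩ | ⟨hx0, h⟩)
    · exact h.symm
    · have := dropTopBit_lt hx0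
      omega
  · rintro rfl
    exact Or.inl ⟨by positivity, rfl⟩

lemma not_bitTree_adj_add_two_pow {x y n : ℕ} (hx : x < 2 ^ n) (hy : y < 2 ^ n) :
    ¬ bitTree.Adj (x + 2 ^ n) (y + 2 ^ n) := by
  rw [bitTree_adj_iff, dropTopBit_add_two_pow hx, dropTopBit_add_two_pow hy]
  omega

lemma atomGraph_adj_iff : ∀ n (a b : atomV n),
    (atomGraph n).Adj a b ↔ bitTree.Adj (atomIndex n a) (atomIndex n b)
  | 0, _, _ => iff_of_false id bitTree.irrefl
  | n + 1, Sum.inl a, Sum.inl b => atomGraph_adj_iff n a b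
  | n + 1, Sum.inl a, Sum.inr b =>
    (atomIndex_injective n).eq_iff.symm.trans
      (bitTree_adj_add_two_pow_iff (atomIndex_lt n a) (atomIndex_lt n b)).symm
  | n + 1, Sum.inr a, Sum.inl b => by
    change a = b ↔ bitTree.Adj (atomIndex n a + 2 ^ n) (atomIndex n b)
    rw [bitTree.adj_comm, bitTree_adj_add_two_pow_iff (atomIndex_lt n b) (atomIndex_lt n a),
      (atomIndex_injective n).eq_iff, eq_comm]
  | n + 1, Sum.inr a, Sum.inr b =>
    iff_of_false id (not_bitTree_adj_add_two_pow (atomIndex_lt n a) (atomIndex_lt n b))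

lemma ncard_neighborSet_atomGraph {n : ℕ} (a : atomV n) :
    ((atomGraph n).neighborSet a).ncard = (bitNbrs n (atomIndex n a)).card := by
  rw [← Set.ncard_image_of_injective _ (atomIndex_injective n), ← Set.ncard_coe_finset]
  congr 1
  ext y
  simp only [Set.mem_image, mem_neighborSet, bitNbrs, coe_filter, mem_range, Set.mem_ofPred_eq]
  constructor
  · rintro ⟨b, hab, rfl⟩
    exact ⟨atomIndex_lt n b, (atomGraph_adj_iff n a b).1 hab⟩
  · rintro ⟨hy, hadj⟩
    obtain ⟨b, rfl⟩ := exists_atomIndex_eq n hy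
    exact ⟨b, (atomGraph_adj_iff n a b).2 hadj, rfl⟩

lemma le_add_two_sub_log_of_isBColoring_atomGraph {n K : ℕ} {c : atomV n → ℕ}
    (hc : IsBColoring (atomGraph n) K c) : K ≤ n + 2 - Nat.log 2 (n + 1) := by
  refine le_add_two_sub_log_of_le_two_pow ?_
  have hmaps : ∀ a ∈ {a | K - 1 ≤ ((atomGraph n).neighborSet a).ncard},
      atomIndex n a ∈ Set.Iio (2 ^ (n + 2 - K)) := by
    intro a ha
    have hdeg := card_bitNbrs_add_log (atomIndex_lt n a)
    rw [Set.mem_ofPred_eq, ncard_neighborSet_atomGraph] at ha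
    have hpow : 2 ^ (Nat.log 2 (atomIndex n a) + 1) ≤ 2 ^ (n + 2 - K) :=
      Nat.pow_le_pow_right Nat.two_pos (by omega)
    exact (Nat.lt_pow_succ_log_self Nat.one_lt_two _).trans_le hpow
  calc K ≤ {a | K - 1 ≤ ((atomGraph n).neighborSet a).ncard}.ncard :=
        hc.le_ncard_setOf_le_ncard_neighborSet
    _ ≤ (Set.Iio (2 ^ (n + 2 - K))).ncard :=
        Set.ncard_le_ncard_of_injOn _ hmaps (atomIndex_injective n).injOn (Set.finite_Iio _)
    _ = 2 ^ (n + 2 - K) := Set.ncard_Iio_nat _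

def extendColoring (pre : ℕ → Option ℕ) (w : ℕ) : ℕ :=
  (pre w).getD <| if w = 0 then 1 else
    if extendColoring pre (dropTopBit w) = 1 then 2 else 1
termination_by w
decreasing_by exact dropTopBit_lt ‹_›

section ExtendColoring

variable {pre : ℕ → Option ℕ}

lemma extendColoring_of_eq_some {w c : ℕ} (h : pre w = some c) : extendColoring pre w = c := by
  rw [extendColoring, h, Option.getD_some]

lemma extendColoring_mem_Icc {m : ℕ} (hm : 2 ≤ m) (hpre : ∀ w c, pre w = some c → c ∈ Icc 1 m)
    (w : ℕ) : extendColoring pre w ∈ Icc 1 m := by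
  rcases hw : pre w with _ | c
  · rw [extendColoring, hw, Option.getD_none, mem_Icc]
    split_ifs <;> omega
  · rw [extendColoring_of_eq_some hw]
    exact hpre w c hw

lemma extendColoring_isProperNat
    (hpre : ∀ w c, w ≠ 0 → pre w = some c → ∃ c', pre (dropTopBit w) = some c' ∧ c' ≠ c) :
    IsProperNat bitTree (extendColoring pre) := by
  have hparent : ∀ w, w ≠ 0 → extendColoring pre (dropTopBit w) ≠ extendColoring pre w := by
    intro w hw
    rcases hpw : pre w with _ | c
    · rw [extendColoring.eq_1 pre w, hpw, Option.getD_none, if_neg hw]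
      split_ifs <;> omega
    · obtain ⟨c', hc', hne⟩ := hpre w c hw hpw
      rwa [extendColoring_of_eq_some hc', extendColoring_of_eq_some hpw]
  rintro x y (⟨hy, rfl⟩ | ⟨hx, rfl⟩)
  · exact hparent y hy
  · exact (hparent x hx).symm

end ExtendColoring

theorem exists_bitTree_coloring {n m : ℕ} (hm : 2 ≤ m)
    (hdeg : ∀ v < m, m - 1 ≤ (bitNbrs n v).card) :
    ∃ col : ℕ → ℕ, (∀ x, col x ∈ Icc 1 m) ∧ IsProperNat bitTree col ∧
      (∀ v < m, col v = v + 1) ∧ ∀ v < m, ∀ s < m, s ≠ v → ∃ y ∈ bitNbrs n v, col y = s + 1 := by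
  classical
  -- `σ v w = some s`: the child `w ≥ m` of `v` is coloured `s + 1`, a colour that `v` misses
  -- among its neighbours below `m`.
  have hσ : ∀ v, ∃ σ : ℕ → Option ℕ, v < m →
      (∀ w s, σ w = some s → s ∈ (range m).erase v \ bitNbrs n v) ∧
      ∀ s ∈ (range m).erase v \ bitNbrs n v, ∃ w ∈ bitNbrs n v \ range m, σ w = some s := by
    intro v
    by_cases hv : v < m
    · obtain ⟨σ, hσ⟩ := exists_partial_surj_of_card_le <|
        card_erase_sdiff_le_card_sdiff (mem_range.2 hv) (notMem_bitNbrs_self n v)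
          (by rw [card_range]; exact hdeg v hv)
      exact ⟨σ, fun _ => hσ⟩
    · exact ⟨fun _ => none, fun h => absurd h hv⟩
  choose σ hσ using hσ
  let pre : ℕ → Option ℕ := fun w =>
    if w < m then some (w + 1)
    else if dropTopBit w < m then (σ (dropTopBit w) w).map (· + 1) else none
  have pre_of_lt : ∀ w < m, pre w = some (w + 1) := fun w hw => if_pos hw
  have hpre_mem : ∀ w c, pre w = some c → c ∈ Icc 1 m := by
    intro w c hw
    simp only [pre] at hw
    split_ifs at hw with hwm hdm
    · rw [← Option.some.inj hw, mem_Icc]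
      omega
    · obtain ⟨s, hs, rfl⟩ := Option.map_eq_some_iff.1 hw
      have := mem_range.1 (mem_of_mem_erase (mem_sdiff.1 ((hσ _ hdm).1 w s hs)).1)
      rw [mem_Icc]
      omega
  have hpre_parent : ∀ w c, w ≠ 0 → pre w = some c →
      ∃ c', pre (dropTopBit w) = some c' ∧ c' ≠ c := by
    intro w c hw0 hw
    have hd := dropTopBit_lt hw0
    simp only [pre] at hw
    split_ifs at hw with hwm hdm
    · refine ⟨dropTopBit w + 1, pre_of_lt _ (hd.trans hwm), ?_⟩
      rw [← Option.some.inj hw]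
      omega
    · obtain ⟨s, hs, rfl⟩ := Option.map_eq_some_iff.1 hw
      have := ne_of_mem_erase (mem_sdiff.1 ((hσ _ hdm).1 w s hs)).1
      exact ⟨dropTopBit w + 1, pre_of_lt _ hdm, by omega⟩
  refine ⟨extendColoring pre, extendColoring_mem_Icc hm hpre_mem,
    extendColoring_isProperNat hpre_parent,
    fun v hv => extendColoring_of_eq_some (pre_of_lt v hv), ?_⟩
  intro v hv s hs hsv
  by_cases hadj : s ∈ bitNbrs n v
  · exact ⟨s, hadj, extendColoring_of_eq_some (pre_of_lt s hs)⟩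
  · obtain ⟨w, hw, hσw⟩ :=
      (hσ v hv).2 s (mem_sdiff.2 ⟨mem_erase.2 ⟨hsv, mem_range.2 hs⟩, hadj⟩)
    obtain ⟨hwN, hwm⟩ := mem_sdiff.1 hw
    rw [mem_range, not_lt] at hwm
    have hwv : dropTopBit w = v := (bitTree_adj_of_lt (mem_filter.1 hwN).2 (by omega)).2
    refine ⟨w, hwN, extendColoring_of_eq_some ?_⟩
    simp [pre, hwm, hwv, hv, hσw]

lemma exists_isBColoring_atomGraph {n : ℕ} (hn : 1 ≤ n) :
    ∃ c, IsBColoring (atomGraph n) (n + 1 - Nat.log 2 n) c := by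
  set m := n + 1 - Nat.log 2 n
  have hlog := Nat.log_lt_self 2 (show n ≠ 0 by omega)
  have hn2 := Nat.lt_two_pow_self (n := n)
  have hdeg : ∀ v < m, m - 1 ≤ (bitNbrs n v).card := by
    intro v hv
    have := card_bitNbrs_add_log (show v < 2 ^ n by omega)
    have := Nat.log_mono_right (b := 2) (show v ≤ n by omega)
    omega
  obtain ⟨col, hmem, hproper, hsmall, hdom⟩ := exists_bitTree_coloring (by omega) hdeg
  refine ⟨col ∘ atomIndex n, fun a => hmem _,
    fun a b hab => hproper ((atomGraph_adj_iff n a b).1 hab), fun i hi => ?_⟩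
  rw [mem_Icc] at hi
  obtain ⟨a, ha⟩ := exists_atomIndex_eq n (x := i - 1) (by omega)
  refine ⟨a, by rw [Function.comp_apply, ha, hsmall _ (by omega)]; omega, fun j hj hji => ?_⟩
  rw [mem_Icc] at hj
  obtain ⟨y, hy, hcol⟩ := hdom (i - 1) (by omega) (j - 1) (by omega) (by omega)
  obtain ⟨hy, hadj⟩ := mem_filter.1 hy
  obtain ⟨b, rfl⟩ := exists_atomIndex_eq n (mem_range.1 hy)
  exact ⟨b, (atomGraph_adj_iff n a b).2 (ha ▸ hadj), by rw [Function.comp_apply, hcol]; omega⟩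

/-- for `k ≥ 2`, `k - ⌊log₂ (k-1)⌋ ≤ b(T_k) ≤ k - ⌊log₂ k⌋ + 1`. -/
theorem bChromatic_treeAtom_bounds (k : ℕ) (hk : 2 ≤ k) :
    k - Nat.log 2 (k - 1) ≤ bChromatic (treeAtom k) ∧
      bChromatic (treeAtom k) ≤ k - Nat.log 2 k + 1 := by
  obtain ⟨n, rfl⟩ : ∃ n, k = n + 1 := ⟨k - 1, by omega⟩
  obtain ⟨c, hc⟩ := exists_isBColoring_atomGraph (n := n) (by omega)
  refine ⟨hc.le_bChromatic, bChromatic_le fun K c' hc' => ?_⟩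
  have : K ≤ n + 2 - Nat.log 2 (n + 1) := le_add_two_sub_log_of_isBColoring_atomGraph hc'
  have := Nat.log_le_self 2 (n + 1)
  omega
end
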